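/- arXiv:1601.02161 — 8 statements merged into one kernel-verified Lean document; each statement's English description precedes it below -/
import Mathlib

section
/- For b ∈ (0, 1/2) and v ∈ (−1, 1), setting θ(v) = log( ((1−2b)·v + √(4b² + (1−4b)·v²)) / (2b·(1−v)) ), one has 2b·sinh(θ(v)) / (1 + 2b·(cosh(θ(v)) − 1)) = v; i.e., θ(v) is the inverse of the density map. -/
/-!
Writing `x = exp θ`, the equation `2b sinh θ / (1 + 2b (cosh θ - 1)) = v` becomes the quadratic
`b (1 - v) x² - (1 - 2b) v x - b (1 + v) = 0`, whose discriminant is `4b² + (1 - 4b) v²`.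
This discriminant exceeds `((1 - 2b) v)²` by `4b² (1 - v²) > 0`, so the root taken with the
`+` sign is positive, and its logarithm is `θ(v)`.
-/

open Real

noncomputable def densityMap (b θ : ℝ) : ℝ :=
  2 * b * sinh θ / (1 + 2 * b * (cosh θ - 1))

lemma densityMap_log_eq_iff {b x : ℝ} (hb : 0 ≤ b) (hx : 0 < x) (v : ℝ) :
    densityMap b (log x) = v ↔
      b * (1 - v) * (x * x) + -((1 - 2 * b) * v) * x + -(b * (1 + v)) = 0 := by
  have hden : 0 < 1 + 2 * b * (cosh (log x) - 1) := by nlinarith [one_le_cosh (log x)]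
  rw [densityMap, div_eq_iff hden.ne', sinh_eq, cosh_eq, exp_neg, exp_log hx]
  field_simp
  constructor <;> intro h <;> linarith

lemma discrim_densityMap_quadratic (b v : ℝ) :
    discrim (b * (1 - v)) (-((1 - 2 * b) * v)) (-(b * (1 + v))) =
      4 * b ^ 2 + (1 - 4 * b) * v ^ 2 := by
  unfold discrim
  ring

lemma sq_lt_discrim_densityMap_quadratic {b v : ℝ} (hb : b ≠ 0) (hv : v ^ 2 < 1) :
    ((1 - 2 * b) * v) ^ 2 < 4 * b ^ 2 + (1 - 4 * b) * v ^ 2 := by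
  have hgap : (4 * b ^ 2 + (1 - 4 * b) * v ^ 2) - ((1 - 2 * b) * v) ^ 2 =
      4 * b ^ 2 * (1 - v ^ 2) := by ring
  have : 0 < 4 * b ^ 2 * (1 - v ^ 2) := by positivity
  linarith

theorem stmt_3_general (b : ℝ) (hb0 : 0 < b) (v : ℝ) (hv : v ∈ Set.Ioo (-1 : ℝ) 1) :
    let θ : ℝ := Real.log (((1 - 2*b) * v + Real.sqrt (4*b^2 + (1 - 4*b) * v^2)) / (2*b*(1 - v)))
    2 * b * Real.sinh θ / (1 + 2 * b * (Real.cosh θ - 1)) = v := by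
  intro θ
  obtain ⟨hv1, hv2⟩ := hv
  set s := √(4 * b ^ 2 + (1 - 4 * b) * v ^ 2)
  have hsq := sq_lt_discrim_densityMap_quadratic hb0.ne' (by nlinarith : v ^ 2 < 1)
  have hroot : 0 < ((1 - 2 * b) * v + s) / (2 * b * (1 - v)) :=
    div_pos (by linarith [neg_sqrt_lt_of_sq_lt hsq]) (by nlinarith)
  have hdisc := discrim_densityMap_quadratic b v
  rw [← mul_self_sqrt ((sq_nonneg _).trans hsq.le)] at hdisc
  change densityMap b θ = v
  rw [densityMap_log_eq_iff hb0.le hroot, quadratic_eq_zero_iff (by nlinarith) hdisc]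
  left
  congr 1 <;> ring

theorem stmt_3 (b : ℝ) (hb0 : 0 < b) (hb : b < 1/2) (v : ℝ) (hv : v ∈ Set.Ioo (-1 : ℝ) 1) :
    let θ : ℝ := Real.log (((1 - 2*b) * v + Real.sqrt (4*b^2 + (1 - 4*b) * v^2)) / (2*b*(1 - v)))
    2 * b * Real.sinh θ / (1 + 2 * b * (Real.cosh θ - 1)) = v :=
  stmt_3_general b hb0 v hv
end

section
/- For b ∈ (0, 1/6), the quantity v_max = (1/2)·√((1+2b)(1−6b)/(1−4b)) lies in (0, 1), and G(v_max) = (1−2b)²/(8 − 32b), where G is the hydrodynamic flux with parameter b. -/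
/-! At `v_max` the radicand `4b² + (1 - 4b)v²` of `G` is the perfect square `((1 - 2b)/2)²`, so the
square root disappears and `G(v_max)` becomes a rational function of `b`. The bound `v_max < 1`
amounts to `4(1 - 4b) - (1 + 2b)(1 - 6b) = 3(1 - 2b)² > 0`. -/

namespace HydrodynamicFlux

noncomputable def flux (b v : ℝ) : ℝ :=
  -v^2/2 + (4*b^2 + (1 - 2*b)^2 * v^2) /
    (2 * (4*b^2 + (1 - 2*b) * Real.sqrt (4*b^2 + (1 - 4*b) * v^2)))

noncomputable def vmax (b : ℝ) : ℝ := (1/2) * Real.sqrt ((1 + 2*b) * (1 - 6*b) / (1 - 4*b))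

variable {b : ℝ}

lemma vmax_nonneg : 0 ≤ vmax b := by
  unfold vmax; positivity

lemma vmax_pos (h₁ : -1/2 < b) (h₂ : b < 1/6) : 0 < vmax b := by
  have : 0 < (1 + 2*b) * (1 - 6*b) / (1 - 4*b) := by
    apply div_pos <;> nlinarith
  unfold vmax; positivity

lemma four_mul_one_sub_mul_vmax_sq (h₁ : -1/2 ≤ b) (h₂ : b ≤ 1/6) :
    4 * (1 - 4*b) * vmax b ^ 2 = (1 + 2*b) * (1 - 6*b) := by
  have : 0 ≤ (1 + 2*b) * (1 - 6*b) / (1 - 4*b) := by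
    apply div_nonneg <;> nlinarith
  rw [vmax, mul_pow, Real.sq_sqrt this]
  field_simp [show (1:ℝ) - 4*b ≠ 0 by linarith]
  ring

lemma vmax_lt_one (h₁ : -1/2 ≤ b) (h₂ : b ≤ 1/6) : vmax b < 1 := by
  have h₄ : 0 < 4 * (1 - 4*b) := by linarith
  refine (sq_lt_one_iff₀ vmax_nonneg).1 (lt_of_mul_lt_mul_left ?_ h₄.le)
  rw [four_mul_one_sub_mul_vmax_sq h₁ h₂]
  nlinarith [sq_nonneg (1 - 2*b)]

lemma radicand_at_vmax (h₁ : -1/2 ≤ b) (h₂ : b ≤ 1/6) :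
    4*b^2 + (1 - 4*b) * vmax b ^ 2 = ((1 - 2*b)/2)^2 := by
  linear_combination (1/4) * four_mul_one_sub_mul_vmax_sq h₁ h₂

lemma flux_vmax (h₁ : -1/2 ≤ b) (h₂ : b ≤ 1/6) :
    flux b (vmax b) = (1 - 2*b)^2 / (8 - 32*b) := by
  have h₈ : (8:ℝ) - 32*b ≠ 0 := by linarith
  have hden : 2 * (4*b^2 + (1 - 2*b) * ((1 - 2*b)/2)) ≠ 0 := by
    nlinarith [sq_nonneg (1 - 2*b)]
  rw [flux, radicand_at_vmax h₁ h₂, Real.sqrt_sq (by linarith),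
    div_add_div _ _ two_ne_zero hden, div_eq_div_iff (mul_ne_zero two_ne_zero hden) h₈]
  linear_combination (2 * ((1 - 2*b)^2 - 8*b^2)) * four_mul_one_sub_mul_vmax_sq h₁ h₂

end HydrodynamicFlux

theorem stmt_8 (b : ℝ) (hb0 : 0 < b) (hb : b < 1/6) :
    let G : ℝ → ℝ := fun v => -v^2/2 +
      (4*b^2 + (1 - 2*b)^2 * v^2) /
        (2 * (4*b^2 + (1 - 2*b) * Real.sqrt (4*b^2 + (1 - 4*b) * v^2)))
    let vmax : ℝ := (1/2) * Real.sqrt ((1 + 2*b) * (1 - 6*b) / (1 - 4*b))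
    vmax ∈ Set.Ioo (0:ℝ) 1 ∧ G vmax = (1 - 2*b)^2 / (8 - 32*b) := by
  have h₁ : -1/2 < b := by linarith
  exact ⟨⟨HydrodynamicFlux.vmax_pos h₁ hb, HydrodynamicFlux.vmax_lt_one h₁.le hb.le⟩,
    HydrodynamicFlux.flux_vmax h₁.le hb.le⟩
end

section
/- For b ∈ (0, 1/6), the point v₀ = √((1−2b)(1−6b)/(1−4b)) lies in (0, 1) and satisfies G(v₀) = b = G(0); i.e., the horizontal tangent line at 0 intersects the graph of G at ±v₀. -/
/-!
Both values are read off from perfect squares under the square root: at `v = 0` the radicand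
is `(2b)²`, and `v₀` is chosen so that `4b² + (1 - 4b) v₀² = (1 - 4b)²`. After that, `G(v) = b`
is a rational identity in `b`, whose denominators `b` and `12b² - 6b + 1` do not vanish.
-/

namespace TangentIntersection

noncomputable def G (b v : ℝ) : ℝ :=
  -v^2/2 + (4*b^2 + (1 - 2*b)^2 * v^2) /
    (2 * (4*b^2 + (1 - 2*b) * Real.sqrt (4*b^2 + (1 - 4*b) * v^2)))

theorem G_zero {b : ℝ} (hb : 0 ≤ b) : G b 0 = b := by
  have hsqrt : Real.sqrt (4*b^2 + (1 - 4*b) * 0^2) = 2*b := by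
    rw [show 4*b^2 + (1 - 4*b) * (0:ℝ)^2 = (2*b)^2 by ring, Real.sqrt_sq (by linarith)]
  rw [G, hsqrt]
  rcases hb.eq_or_lt with rfl | hb
  · simp
  · field_simp
    ring

theorem G_eq_self_of_sq_eq {b v : ℝ} (hb : b < 1/4)
    (hv : v^2 = (1 - 2*b) * (1 - 6*b) / (1 - 4*b)) : G b v = b := by
  have h4b : 0 < 1 - 4*b := by linarith
  have hv' : (1 - 4*b) * v^2 = (1 - 2*b) * (1 - 6*b) := by
    rw [hv, mul_div_cancel₀ _ h4b.ne']
  have hsqrt : Real.sqrt (4*b^2 + (1 - 4*b) * v^2) = 1 - 4*b := by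
    rw [show 4*b^2 + (1 - 4*b) * v^2 = (1 - 4*b)^2 by linear_combination hv',
      Real.sqrt_sq h4b.le]
  have hden : 4*b^2 + (1 - 2*b) * (1 - 4*b) ≠ 0 := by nlinarith [sq_nonneg (6*b - 1)]
  rw [G, hsqrt]
  field_simp
  linear_combination 2*b * hv'

theorem radicand_v0_mem_Ioo {b : ℝ} (hb0 : 0 < b) (hb : b < 1/6) :
    (1 - 2*b) * (1 - 6*b) / (1 - 4*b) ∈ Set.Ioo (0:ℝ) 1 := by
  have h4b : 0 < 1 - 4*b := by linarith
  refine ⟨div_pos (mul_pos (by linarith) (by linarith)) h4b, ?_⟩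
  rw [div_lt_one h4b]
  nlinarith

end TangentIntersection

theorem stmt_9 (b : ℝ) (hb0 : 0 < b) (hb : b < 1/6) :
    let G : ℝ → ℝ := fun v => -v^2/2 +
      (4*b^2 + (1 - 2*b)^2 * v^2) /
        (2 * (4*b^2 + (1 - 2*b) * Real.sqrt (4*b^2 + (1 - 4*b) * v^2)))
    let v0 : ℝ := Real.sqrt ((1 - 2*b) * (1 - 6*b) / (1 - 4*b))
    v0 ∈ Set.Ioo (0:ℝ) 1 ∧ G v0 = b ∧ G 0 = b := by
  intro G v0
  obtain ⟨hpos, hlt⟩ := TangentIntersection.radicand_v0_mem_Ioo hb0 hb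
  refine ⟨⟨Real.sqrt_pos.mpr hpos, ?_⟩, ?_, TangentIntersection.G_zero hb0.le⟩
  · rw [Real.sqrt_lt' one_pos, one_pow]
    exact hlt
  · exact TangentIntersection.G_eq_self_of_sq_eq (by linarith) (Real.sq_sqrt hpos.le)
end

section
/- For b ∈ (0, 1/6), G has a strict local minimum at v = 0: G'(0) = 0 and there is δ > 0 such that G(v) > G(0) = b for all 0 < |v| < δ. -/
/-!
`G` is even, so `G'(0) = 0`. The tangent-line bound `√(a² + t) ≤ a + t / (2a)` at `a = 2b`
bounds the denominator of `G` above by a quadratic in `v`; clearing denominators,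
`G(v) - b` is then bounded below by a positive multiple of `v² (2b(1 - 6b) - (1 - 2b)(1 - 4b) v²)`,
which is positive for small `v ≠ 0` exactly because `b < 1/6`.
-/

open Real

theorem Function.Even.deriv_zero {f : ℝ → ℝ} (hf : f.Even) : deriv f 0 = 0 := by
  have h := deriv_comp_neg (f := f) (x := 0)
  rw [funext hf, neg_zero] at h
  linarith

theorem Real.sqrt_sq_add_le {a t : ℝ} (ha : 0 < a) (ht : 0 ≤ t) :
    √(a ^ 2 + t) ≤ a + t / (2 * a) := by
  have hsq : (a + t / (2 * a)) ^ 2 = a ^ 2 + t + (t / (2 * a)) ^ 2 := by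
    field_simp
    ring
  rw [sqrt_le_left (by positivity), hsq]
  nlinarith [sq_nonneg (t / (2 * a))]

namespace LocalMin

noncomputable def G (b v : ℝ) : ℝ :=
  -v^2/2 + (4*b^2 + (1 - 2*b)^2 * v^2) /
    (2 * (4*b^2 + (1 - 2*b) * √(4*b^2 + (1 - 4*b) * v^2)))

variable {b : ℝ}

theorem G_even (b : ℝ) : (G b).Even := fun v => by simp only [G, neg_sq]

theorem G_zero (hb : 0 < b) : G b 0 = b := by
  have hrad : 4*b^2 + (1 - 4*b) * (0:ℝ)^2 = (2*b)^2 := by ring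
  simp only [G, hrad, sqrt_sq (by linarith : 0 ≤ 2*b)]
  field_simp
  ring

theorem denominator_le (hb0 : 0 < b) (hb : b ≤ 1/4) (v : ℝ) :
    4*b^2 + (1 - 2*b) * √(4*b^2 + (1 - 4*b) * v^2)
      ≤ (8*b^2 + (1 - 2*b) * (1 - 4*b) * v^2) / (4*b) := by
  have hsqrt : √(4*b^2 + (1 - 4*b) * v^2) ≤ 2*b + (1 - 4*b) * v^2 / (2 * (2*b)) := by
    have := sqrt_sq_add_le (a := 2*b) (t := (1 - 4*b) * v^2) (by linarith)
      (mul_nonneg (by linarith) (sq_nonneg v))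
    rwa [mul_pow, show (2:ℝ)^2 = 4 by norm_num] at this
  calc 4*b^2 + (1 - 2*b) * √(4*b^2 + (1 - 4*b) * v^2)
      ≤ 4*b^2 + (1 - 2*b) * (2*b + (1 - 4*b) * v^2 / (2 * (2*b))) := by
        gcongr
        linarith
    _ = (8*b^2 + (1 - 2*b) * (1 - 4*b) * v^2) / (4*b) := by
        field_simp
        ring

theorem lt_G (hb0 : 0 < b) {v : ℝ} (hv0 : 0 < v^2) (hv : v^2 < b * (1 - 6*b)) :
    b < G b v := by
  have h6b : 0 < 1 - 6*b := pos_of_mul_pos_right (hv0.trans hv) hb0.le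
  set D := 4*b^2 + (1 - 2*b) * √(4*b^2 + (1 - 4*b) * v^2)
  have hD : 0 < D := by
    have : 0 ≤ (1 - 2*b) * √(4*b^2 + (1 - 4*b) * v^2) :=
      mul_nonneg (by linarith) (sqrt_nonneg _)
    positivity
  have hDle := denominator_le hb0 (by linarith) v
  have hk : (1 - 2*b) * (1 - 4*b) * v^2 < 2*b*(1 - 6*b) := by nlinarith
  have hpoly : (2*b + v^2) * (8*b^2 + (1 - 2*b) * (1 - 4*b) * v^2)
      < 4*b * (4*b^2 + (1 - 2*b)^2 * v^2) := by
    have hdiff : 4*b * (4*b^2 + (1 - 2*b)^2 * v^2)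
        - (2*b + v^2) * (8*b^2 + (1 - 2*b) * (1 - 4*b) * v^2)
        = v^2 * (2*b*(1 - 6*b) - (1 - 2*b) * (1 - 4*b) * v^2) := by ring
    nlinarith [mul_pos hv0 (sub_pos.mpr hk)]
  have hnum : (2*b + v^2) * D < 4*b^2 + (1 - 2*b)^2 * v^2 := by
    calc (2*b + v^2) * D
        ≤ (2*b + v^2) * ((8*b^2 + (1 - 2*b) * (1 - 4*b) * v^2) / (4*b)) := by gcongr
      _ < 4*b^2 + (1 - 2*b)^2 * v^2 := by
        rw [mul_div_assoc', div_lt_iff₀ (by positivity)]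
        linarith
  have : b + v^2/2 < (4*b^2 + (1 - 2*b)^2 * v^2) / (2 * D) := by
    rw [lt_div_iff₀ (by positivity)]
    linarith
  simp only [G]
  linarith

end LocalMin

theorem stmt_10 (b : ℝ) (hb0 : 0 < b) (hb : b < 1/6) :
    let G : ℝ → ℝ := fun v => -v^2/2 +
      (4*b^2 + (1 - 2*b)^2 * v^2) /
        (2 * (4*b^2 + (1 - 2*b) * Real.sqrt (4*b^2 + (1 - 4*b) * v^2)))
    deriv G 0 = 0 ∧ G 0 = b ∧
    ∃ δ > (0:ℝ), ∀ v : ℝ, 0 < |v| → |v| < δ → G 0 < G v := by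
  intro G
  change deriv (LocalMin.G b) 0 = 0 ∧ LocalMin.G b 0 = b ∧
    ∃ δ > (0:ℝ), ∀ v : ℝ, 0 < |v| → |v| < δ → LocalMin.G b 0 < LocalMin.G b v
  refine ⟨(LocalMin.G_even b).deriv_zero, LocalMin.G_zero hb0, √(b * (1 - 6*b)),
    sqrt_pos.mpr (mul_pos hb0 (by linarith)), fun v hv hvδ => ?_⟩
  rw [LocalMin.G_zero hb0]
  refine LocalMin.lt_G hb0 ?_ ?_
  · simpa only [sq_abs] using pow_pos hv 2
  · simpa only [sq_abs] using (lt_sqrt (abs_nonneg v)).mp hvδ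
end

section
/- If b ∈ (1/6, 1/(2+√2)], then the flux G(v) = −v²/2 + (4b² + (1−2b)²v²)/(2(4b² + (1−2b)√(4b² + (1−4b)v²))) is strictly concave on [−1, 1]. -/
/-!
On `(-1, 1)` the flux has second derivative `-1 + 2b²(1 - 2b) / s³`, where
`s² = 4b² + (1 - 4b)v² = (2b)²(1 - v²) + (1 - 2b)²v²` is a convex combination of `(2b)²` and
`(1 - 2b)²`. For `b ≤ 1/4` this gives `s ≥ 2b`, and `8b³ > 2b²(1 - 2b)` is exactly `b > 1/6`;
for `b > 1/4` it gives `s > 1 - 2b`, and `(1 - 2b)³ ≥ 2b²(1 - 2b)` is exactly `b ≤ 1/(2 + √2)`.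
-/

open Real Set

noncomputable section

def fluxRadicand (b v : ℝ) : ℝ := 4*b^2 + (1 - 4*b) * v^2

def flux (b v : ℝ) : ℝ :=
  -v^2/2 + (4*b^2 + (1 - 2*b)^2 * v^2) / (2 * (4*b^2 + (1 - 2*b) * √(fluxRadicand b v)))

def fluxDeriv (b v : ℝ) : ℝ := -v + (1 - 2*b) * v / (2 * √(fluxRadicand b v))

lemma fluxRadicand_eq (b v : ℝ) : fluxRadicand b v = (2*b)^2 * (1 - v^2) + (1 - 2*b)^2 * v^2 := by
  unfold fluxRadicand; ring

lemma fluxRadicand_pos {b v : ℝ} (hb : b ≠ 0) (hv : v^2 < 1) : 0 < fluxRadicand b v := by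
  rw [fluxRadicand_eq]
  have : 0 < (2*b)^2 * (1 - v^2) := mul_pos (by positivity) (by linarith)
  positivity

lemma continuous_fluxRadicand (b : ℝ) : Continuous (fluxRadicand b) := by
  unfold fluxRadicand; fun_prop

lemma flux_denom_pos {b : ℝ} (hb0 : 0 < b) (hb : b ≤ 1/2) (v : ℝ) :
    0 < 4*b^2 + (1 - 2*b) * √(fluxRadicand b v) :=
  add_pos_of_pos_of_nonneg (by positivity) (mul_nonneg (by linarith) (sqrt_nonneg _))

lemma continuous_flux {b : ℝ} (hb0 : 0 < b) (hb : b ≤ 1/2) : Continuous (flux b) := by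
  have := continuous_fluxRadicand b
  exact (by fun_prop : Continuous fun v : ℝ => -v^2/2).add <| Continuous.div (by fun_prop)
    (by fun_prop) fun v => (mul_pos two_pos (flux_denom_pos hb0 hb v)).ne'

lemma hasDerivAt_sqrt_fluxRadicand {b x : ℝ} (hx : 0 < fluxRadicand b x) :
    HasDerivAt (fun v => √(fluxRadicand b v)) ((1 - 4*b) * x / √(fluxRadicand b x)) x := by
  have hq : HasDerivAt (fluxRadicand b) ((1 - 4*b) * (2*x)) x := by
    show HasDerivAt (fun v => 4*b^2 + (1 - 4*b) * v^2) _ x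
    simpa using ((hasDerivAt_pow 2 x).const_mul (1 - 4*b)).const_add (4*b^2)
  refine (hq.sqrt hx.ne').congr_deriv ?_
  field_simp

lemma hasDerivAt_flux {b x : ℝ} (hx : 0 < fluxRadicand b x)
    (hD : 4*b^2 + (1 - 2*b) * √(fluxRadicand b x) ≠ 0) :
    HasDerivAt (flux b) (fluxDeriv b x) x := by
  have hs : 0 < √(fluxRadicand b x) := sqrt_pos.mpr hx
  have hs2 : √(fluxRadicand b x) ^ 2 = 4*b^2 + (1 - 4*b) * x^2 := sq_sqrt hx.le
  have hN : HasDerivAt (fun v : ℝ => 4*b^2 + (1 - 2*b)^2 * v^2) ((1 - 2*b)^2 * (2*x)) x := by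
    simpa using ((hasDerivAt_pow 2 x).const_mul ((1 - 2*b)^2)).const_add (4*b^2)
  have hD' :=
    (((hasDerivAt_sqrt_fluxRadicand hx).const_mul (1 - 2*b)).const_add (4*b^2)).const_mul 2
  have hsq : HasDerivAt (fun v : ℝ => -v^2/2) (-x) x := by
    simpa [neg_div] using (hasDerivAt_pow 2 x).neg.div_const 2
  refine (hsq.add (hN.div hD' (mul_ne_zero two_ne_zero hD))).congr_deriv ?_
  unfold fluxDeriv
  set s := √(fluxRadicand b x)
  -- the quotient collapses because `(1 - 2b)² s² = 16b⁴ + (1 - 4b)(4b² + (1 - 2b)² x²)`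
  have key : (1 - 2*b)^2 * (2*x) * (2 * (4*b^2 + (1 - 2*b) * s))
      - (4*b^2 + (1 - 2*b)^2 * x^2) * (2 * ((1 - 2*b) * ((1 - 4*b) * x / s)))
      = (1 - 2*b) * x / (2 * s) * (2 * (4*b^2 + (1 - 2*b) * s))^2 := by
    field_simp
    linear_combination ((1-2*b)^3*x) * hs2
  rw [key, mul_div_cancel_right₀ _ (pow_ne_zero 2 (mul_ne_zero two_ne_zero hD))]

lemma hasDerivAt_fluxDeriv {b x : ℝ} (hx : 0 < fluxRadicand b x) :
    HasDerivAt (fluxDeriv b) (-1 + 2*b^2*(1 - 2*b) / √(fluxRadicand b x) ^ 3) x := by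
  have hs : 0 < √(fluxRadicand b x) := sqrt_pos.mpr hx
  have hs2 : √(fluxRadicand b x) ^ 2 = 4*b^2 + (1 - 4*b) * x^2 := sq_sqrt hx.le
  have hN : HasDerivAt (fun v : ℝ => (1 - 2*b) * v) (1 - 2*b) x := by
    simpa using (hasDerivAt_id x).const_mul (1 - 2*b)
  refine ((hasDerivAt_neg x).add
    (hN.div ((hasDerivAt_sqrt_fluxRadicand hx).const_mul 2) (by positivity))).congr_deriv ?_
  field_simp
  linear_combination (1-2*b) * hs2

lemma deriv2_flux {b x : ℝ} (hb0 : 0 < b) (hb : b ≤ 1/2) (hx : 0 < fluxRadicand b x) :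
    deriv^[2] (flux b) x = -1 + 2*b^2*(1 - 2*b) / √(fluxRadicand b x) ^ 3 := by
  have hopen : IsOpen {v | 0 < fluxRadicand b v} :=
    isOpen_lt continuous_const (continuous_fluxRadicand b)
  have hderiv : deriv (flux b) =ᶠ[nhds x] fluxDeriv b :=
    Filter.eventuallyEq_of_mem (hopen.mem_nhds hx) fun y hy =>
      (hasDerivAt_flux hy (flux_denom_pos hb0 hb y).ne').deriv
  rw [Function.iterate_succ_apply, Function.iterate_one, hderiv.deriv_eq,
    (hasDerivAt_fluxDeriv hx).deriv]

lemma two_mul_sq_mul_lt_sqrt_fluxRadicand_pow_three {b v : ℝ} (hb1 : 1/6 < b)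
    (hb2 : 2*b^2 ≤ (1 - 2*b)^2) (hv : v^2 < 1) :
    2*b^2*(1 - 2*b) < √(fluxRadicand b v) ^ 3 := by
  have hb0 : 0 < b := by linarith
  have hq := fluxRadicand_eq b v
  have hs : 0 < √(fluxRadicand b v) := sqrt_pos.mpr (fluxRadicand_pos hb0.ne' hv)
  rcases le_or_gt b (1/4) with hb | hb
  · have h2b : 2*b ≤ √(fluxRadicand b v) := (le_sqrt' (by linarith)).mpr (by nlinarith)
    have := pow_le_pow_left₀ (by linarith) h2b 3
    nlinarith [mul_pos (mul_pos hb0 hb0) (by linarith : 0 < 6*b - 1)]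
  · rcases le_or_gt (1 - 2*b) 0 with hc | hc
    · nlinarith [pow_pos hs 3]
    · have hcs : 1 - 2*b < √(fluxRadicand b v) := (lt_sqrt hc.le).mpr (by nlinarith)
      have := pow_lt_pow_left₀ hcs hc.le (by norm_num : 3 ≠ 0)
      nlinarith

lemma sqrt_two_mul_le_one_sub_two_mul {b : ℝ} (hb : b ≤ 1 / (2 + √2)) : √2 * b ≤ 1 - 2*b := by
  have := (le_div_iff₀ (by positivity)).mp hb
  linarith

end

theorem stmt_11 (b : ℝ) (hb1 : 1/6 < b) (hb2 : b ≤ 1 / (2 + Real.sqrt 2)) :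
    StrictConcaveOn ℝ (Set.Icc (-1 : ℝ) 1)
      (fun v : ℝ => -v^2/2 +
        (4*b^2 + (1 - 2*b)^2 * v^2) /
          (2 * (4*b^2 + (1 - 2*b) * Real.sqrt (4*b^2 + (1 - 4*b) * v^2)))) := by
  show StrictConcaveOn ℝ (Icc (-1) 1) (flux b)
  have hb0 : 0 < b := by linarith
  have hroot := sqrt_two_mul_le_one_sub_two_mul hb2
  have hb_half : b ≤ 1/2 := by nlinarith [sqrt_nonneg 2]
  have hb_sq : 2*b^2 ≤ (1 - 2*b)^2 := by
    have := pow_le_pow_left₀ (by positivity) hroot 2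
    rwa [mul_pow, sq_sqrt zero_le_two] at this
  refine strictConcaveOn_of_deriv2_neg (convex_Icc _ _) (continuous_flux hb0 hb_half).continuousOn
    fun x hx => ?_
  rw [interior_Icc] at hx
  have hx2 : x^2 < 1 := by nlinarith [hx.1, hx.2]
  have hq := fluxRadicand_pos hb0.ne' hx2
  rw [deriv2_flux hb0 hb_half hq]
  have hcube := two_mul_sq_mul_lt_sqrt_fluxRadicand_pow_three hb1 hb_sq hx2
  have := (div_lt_one (pow_pos (sqrt_pos.mpr hq) 3)).mpr hcube
  linarith
end

section
/- If b ∈ (0, 1/6), then G is not concave on [−1, 1] and not convex on [−1, 1]; in particular there exist points at which the second derivative of G is positive and points at which it is negative. -/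
/-!
Multiplying by the conjugate of the denominator gives, with `R(v) = √(4b² + (1 - 4b)v²)`,
`G(v) = -v²/2 + ((1 - 2b)R(v) - 4b²)/(2(1 - 4b))`, hence `G'' = -1 + 2b²(1 - 2b)/R³`.
`G` is even with `G(0) = b > 0 = G(±1)`, so it is not convex; and
`G(t) - G(0) = t²(1 - 4b - R(t))/(2(R(t) + 2b))` is positive at `t = √(1 - 6b)`, so it is not
concave. Finally `R(0) = 2b` gives `G''(0) = (1 - 6b)/(4b) > 0`, while `R(1/2) > 1/3` and
`2b²(1 - 2b) < 1/27` give `G''(1/2) < 0`.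
-/

open Real Set

lemma ConcaveOn.map_le_map_zero_of_even {s : Set ℝ} {f : ℝ → ℝ} (hf : ConcaveOn ℝ s f)
    {x : ℝ} (hx : x ∈ s) (hx' : -x ∈ s) (heven : f (-x) = f x) : f x ≤ f 0 := by
  have h := hf.2 hx hx' (by norm_num : (0 : ℝ) ≤ 1 / 2) (by norm_num : (0 : ℝ) ≤ 1 / 2)
    (by norm_num)
  simp only [smul_eq_mul, heven] at h
  rw [show (1 / 2 : ℝ) * x + 1 / 2 * -x = 0 by ring] at h
  linarith

lemma ConvexOn.map_zero_le_of_even {s : Set ℝ} {f : ℝ → ℝ} (hf : ConvexOn ℝ s f)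
    {x : ℝ} (hx : x ∈ s) (hx' : -x ∈ s) (heven : f (-x) = f x) : f 0 ≤ f x := by
  simpa using hf.neg.map_le_map_zero_of_even hx hx' (by simp [heven])

noncomputable def radical (b v : ℝ) : ℝ := √(4 * b ^ 2 + (1 - 4 * b) * v ^ 2)

noncomputable def G (b v : ℝ) : ℝ :=
  -v ^ 2 / 2 +
    (4 * b ^ 2 + (1 - 2 * b) ^ 2 * v ^ 2) / (2 * (4 * b ^ 2 + (1 - 2 * b) * radical b v))

lemma G_neg (b v : ℝ) : G b (-v) = G b v := by
  simp only [G, radical, neg_sq]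

section

variable {b : ℝ}

lemma radical_zero (hb : 0 ≤ b) : radical b 0 = 2 * b := by
  rw [radical, show 4 * b ^ 2 + (1 - 4 * b) * 0 ^ 2 = (2 * b) ^ 2 by ring, sqrt_sq (by linarith)]

lemma radical_one (hb : b ≤ 1 / 2) : radical b 1 = 1 - 2 * b := by
  rw [radical, show 4 * b ^ 2 + (1 - 4 * b) * 1 ^ 2 = (1 - 2 * b) ^ 2 by ring,
    sqrt_sq (by linarith)]

lemma G_zero (hb : 0 < b) : G b 0 = b := by
  rw [G, radical_zero hb.le]
  field_simp
  ring

lemma G_one (hb : b ≤ 1 / 2) : G b 1 = 0 := by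
  have : 0 < 4 * b ^ 2 + (1 - 2 * b) ^ 2 := by nlinarith [sq_nonneg (4 * b - 1)]
  rw [G, radical_one hb]
  field_simp
  ring

lemma radicand_pos (hb0 : 0 < b) (hb : b ≤ 1 / 4) (v : ℝ) :
    0 < 4 * b ^ 2 + (1 - 4 * b) * v ^ 2 := by
  have : 0 ≤ (1 - 4 * b) * v ^ 2 := mul_nonneg (by linarith) (sq_nonneg v)
  positivity

lemma radical_pos (hb0 : 0 < b) (hb : b ≤ 1 / 4) (v : ℝ) : 0 < radical b v :=
  sqrt_pos.2 (radicand_pos hb0 hb v)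

lemma radical_sq (hb0 : 0 < b) (hb : b ≤ 1 / 4) (v : ℝ) :
    radical b v ^ 2 = 4 * b ^ 2 + (1 - 4 * b) * v ^ 2 :=
  sq_sqrt (radicand_pos hb0 hb v).le

lemma hasDerivAt_radical (hb0 : 0 < b) (hb : b ≤ 1 / 4) (x : ℝ) :
    HasDerivAt (radical b) ((1 - 4 * b) * x / radical b x) x := by
  refine ((((hasDerivAt_pow 2 x).const_mul (1 - 4 * b)).const_add (4 * b ^ 2)).sqrt
    (radicand_pos hb0 hb x).ne').congr_deriv ?_
  have := (radical_pos hb0 hb x).ne'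
  simp only [radical] at this ⊢
  field_simp
  ring

lemma G_eq (hb0 : 0 < b) (hb : b < 1 / 4) :
    G b = fun v => -v ^ 2 / 2 + ((1 - 2 * b) * radical b v - 4 * b ^ 2) / (2 * (1 - 4 * b)) := by
  funext v
  have hS := radical_pos hb0 hb.le v
  have hden : 0 < 2 * (4 * b ^ 2 + (1 - 2 * b) * radical b v) := by
    have : 0 < 1 - 2 * b := by linarith
    positivity
  rw [G]
  congr 1
  rw [div_eq_div_iff hden.ne' (by linarith)]
  linear_combination (-(2 * (1 - 2 * b) ^ 2)) * radical_sq hb0 hb.le v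

lemma deriv_G (hb0 : 0 < b) (hb : b < 1 / 4) :
    deriv (G b) = fun x => -x + (1 - 2 * b) * x / (2 * radical b x) := by
  funext x
  rw [G_eq hb0 hb]
  refine HasDerivAt.deriv ?_
  refine (((hasDerivAt_pow 2 x).neg.div_const 2).add
    ((((hasDerivAt_radical hb0 hb.le x).const_mul (1 - 2 * b)).sub_const (4 * b ^ 2)).div_const
      (2 * (1 - 4 * b)))).congr_deriv ?_
  have := (radical_pos hb0 hb.le x).ne'
  have : 1 - b * 4 ≠ 0 := by linarith
  field_simp
  ring

lemma deriv_deriv_G (hb0 : 0 < b) (hb : b < 1 / 4) (x : ℝ) :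
    deriv (deriv (G b)) x = -1 + 2 * b ^ 2 * (1 - 2 * b) / radical b x ^ 3 := by
  rw [deriv_G hb0 hb]
  refine HasDerivAt.deriv ?_
  have hS := radical_pos hb0 hb.le x
  refine ((hasDerivAt_id' x).neg.add
    (((hasDerivAt_id' x).const_mul (1 - 2 * b)).div
      ((hasDerivAt_radical hb0 hb.le x).const_mul 2) (by positivity))).congr_deriv ?_
  field_simp
  linear_combination (1 - 2 * b) * radical_sq hb0 hb.le x

lemma G_sub_G_zero (hb0 : 0 < b) (hb : b < 1 / 4) (v : ℝ) :
    G b v - G b 0 = v ^ 2 * (1 - 4 * b - radical b v) / (2 * (radical b v + 2 * b)) := by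
  have hS := radical_pos hb0 hb.le v
  have : 1 - b * 4 ≠ 0 := by linarith
  rw [G_eq hb0 hb]
  dsimp only
  rw [radical_zero hb0.le]
  field_simp
  linear_combination (1 - 2 * b) * radical_sq hb0 hb.le v

lemma not_concaveOn_G (hb0 : 0 < b) (hb : b < 1 / 6) : ¬ ConcaveOn ℝ (Icc (-1) 1) (G b) := by
  intro hconc
  set t := √(1 - 6 * b)
  have ht : t ^ 2 = 1 - 6 * b := sq_sqrt (by linarith)
  have ht1 : t ≤ 1 := sqrt_le_one.2 (by linarith)
  have htS : radical b t < 1 - 4 * b := by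
    refine lt_of_pow_lt_pow_left₀ 2 (by linarith) ?_
    rw [radical_sq hb0 (by linarith), ht]
    nlinarith
  have hlt : 0 < G b t - G b 0 := by
    rw [G_sub_G_zero hb0 (by linarith)]
    have := radical_pos hb0 (by linarith) t
    have : 0 < t ^ 2 := by rw [ht]; linarith
    apply div_pos <;> nlinarith
  have hle := hconc.map_le_map_zero_of_even ⟨by linarith [sqrt_nonneg (1 - 6 * b)], ht1⟩
    ⟨by linarith, by linarith [sqrt_nonneg (1 - 6 * b)]⟩ (G_neg b t)
  linarith

lemma not_convexOn_G (hb0 : 0 < b) (hb : b ≤ 1 / 2) : ¬ ConvexOn ℝ (Icc (-1) 1) (G b) := by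
  intro hconv
  have := hconv.map_zero_le_of_even (x := 1) (by norm_num) (by norm_num) (G_neg b 1)
  rw [G_zero hb0, G_one hb] at this
  linarith

lemma deriv_deriv_G_zero_pos (hb0 : 0 < b) (hb : b < 1 / 6) : 0 < deriv (deriv (G b)) 0 := by
  rw [deriv_deriv_G hb0 (by linarith), radical_zero hb0.le, lt_neg_add_iff_add_lt, add_zero,
    lt_div_iff₀ (by positivity)]
  nlinarith [pow_pos hb0 3]

lemma deriv_deriv_G_half_neg (hb0 : 0 < b) (hb : b < 1 / 6) : deriv (deriv (G b)) (1 / 2) < 0 := by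
  have hS := radical_pos hb0 (by linarith) (1 / 2)
  have hS3 : 1 / 3 < radical b (1 / 2) := by
    refine lt_of_pow_lt_pow_left₀ 2 hS.le ?_
    rw [radical_sq hb0 (by linarith)]
    nlinarith [sq_nonneg (b - 1 / 8)]
  have hcube : 1 / 27 < radical b (1 / 2) ^ 3 := by
    calc (1 / 27 : ℝ) = (1 / 3) ^ 3 := by norm_num
      _ < _ := by gcongr
  have hnum : 2 * b ^ 2 * (1 - 2 * b) < 1 / 27 := by
    nlinarith [mul_pos (mul_pos hb0 hb0) (show (0 : ℝ) < 1 / 6 - b by linarith)]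
  rw [deriv_deriv_G hb0 (by linarith), neg_add_lt_iff_lt_add, add_zero,
    div_lt_one (by positivity)]
  linarith

end

theorem stmt_12 (b : ℝ) (hb0 : 0 < b) (hb : b < 1/6) :
    let G : ℝ → ℝ := fun v => -v^2/2 +
      (4*b^2 + (1 - 2*b)^2 * v^2) /
        (2 * (4*b^2 + (1 - 2*b) * Real.sqrt (4*b^2 + (1 - 4*b) * v^2)))
    ¬ ConcaveOn ℝ (Set.Icc (-1 : ℝ) 1) G ∧
    ¬ ConvexOn ℝ (Set.Icc (-1 : ℝ) 1) G ∧
    (∃ x ∈ Set.Ioo (-1 : ℝ) 1, 0 < deriv (deriv G) x) ∧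
    (∃ y ∈ Set.Ioo (-1 : ℝ) 1, deriv (deriv G) y < 0) := by
  exact ⟨not_concaveOn_G hb0 hb, not_convexOn_G hb0 (by linarith),
    ⟨0, by norm_num, deriv_deriv_G_zero_pos hb0 hb⟩,
    ⟨1 / 2, by norm_num, deriv_deriv_G_half_neg hb0 hb⟩⟩
end

section
/- For b ∈ (0, 1/6), one has the strict chain of inequalities 0 < v_infl < v_max < v₀ < 1, where v_infl = √(((2b²(1−2b))^{2/3} − 4b²)/(1−4b)), v_max = (1/2)√((1+2b)(1−6b)/(1−4b)) and v₀ = √((1−2b)(1−6b)/(1−4b)). -/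
/-!
Write `x = 2b²(1 - 2b)`. Both bounds `(2b)³ < x < ((1 - 2b)/2)³` reduce to `4b < 1 - 2b`,
i.e. `b < 1/6`; raising them to the power `2/3` gives
`4b² < x^(2/3) < ((1 - 2b)/2)² = 4b² + (1 + 2b)(1 - 6b)/4`,
which is exactly what `0 < v_infl < v_max` needs. The remaining two inequalities are polynomial.
-/

open Real

lemma pow_three_rpow_two_thirds {c : ℝ} (hc : 0 ≤ c) : (c ^ 3) ^ ((2 : ℝ) / 3) = c ^ 2 := by
  rw [← rpow_natCast c 3, ← rpow_mul hc]
  norm_num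

lemma sq_lt_rpow_two_thirds {c x : ℝ} (hc : 0 ≤ c) (h : c ^ 3 < x) :
    c ^ 2 < x ^ ((2 : ℝ) / 3) := by
  rw [← pow_three_rpow_two_thirds hc]
  exact rpow_lt_rpow (by positivity) h (by norm_num)

lemma rpow_two_thirds_lt_sq {c x : ℝ} (hc : 0 ≤ c) (hx : 0 ≤ x) (h : x < c ^ 3) :
    x ^ ((2 : ℝ) / 3) < c ^ 2 := by
  rw [← pow_three_rpow_two_thirds hc]
  exact rpow_lt_rpow hx h (by norm_num)

lemma half_mul_sqrt (z : ℝ) : (1 / 2) * √z = √(z / 4) := by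
  rw [sqrt_div' z (by norm_num : (0 : ℝ) ≤ 4), show (4 : ℝ) = 2 ^ 2 by norm_num,
    sqrt_sq (by norm_num)]
  ring

theorem stmt_15 (b : ℝ) (hb0 : 0 < b) (hb : b < 1/6) :
    let vi : ℝ := Real.sqrt (((2*b^2*(1 - 2*b)) ^ ((2:ℝ)/3) - 4*b^2) / (1 - 4*b))
    let vmax : ℝ := (1/2) * Real.sqrt ((1 + 2*b) * (1 - 6*b) / (1 - 4*b))
    let v0 : ℝ := Real.sqrt ((1 - 2*b) * (1 - 6*b) / (1 - 4*b))
    0 < vi ∧ vi < vmax ∧ vmax < v0 ∧ v0 < 1 := by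
  intro vi vmax v0
  have hc : 0 < 1 - 4 * b := by linarith
  set x := 2 * b ^ 2 * (1 - 2 * b)
  have hx : 0 ≤ x := by nlinarith [pow_pos hb0 2]
  have hlow : 4 * b ^ 2 < x ^ ((2 : ℝ) / 3) := by
    have := sq_lt_rpow_two_thirds (c := 2 * b) (x := x) (by linarith) (by nlinarith [pow_pos hb0 2])
    linarith
  have hupp : x ^ ((2 : ℝ) / 3) - 4 * b ^ 2 < (1 + 2 * b) * (1 - 6 * b) / 4 := by
    have := rpow_two_thirds_lt_sq (c := (1 - 2 * b) / 2) (x := x) (by linarith) hx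
      (by nlinarith [pow_pos hb0 2, mul_pos (by linarith : 0 < 1 - 6 * b) hb0])
    linarith
  have hvmax : vmax = √((1 + 2 * b) * (1 - 6 * b) / 4 / (1 - 4 * b)) := by
    rw [div_right_comm]; exact half_mul_sqrt _
  refine ⟨sqrt_pos.2 (div_pos (by linarith) hc), ?_, ?_, ?_⟩
  · rw [hvmax]
    exact sqrt_lt_sqrt (div_nonneg (by linarith) hc.le) (div_lt_div_of_pos_right hupp hc)
  · rw [hvmax]
    exact sqrt_lt_sqrt (div_nonneg (by nlinarith) hc.le)
      (div_lt_div_of_pos_right (by nlinarith) hc)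
  · exact (sqrt_lt' one_pos).2 (by rw [one_pow, div_lt_one hc]; nlinarith)
end

section
/- For b ∈ (0, 1/2), the equilibrium expected jump rate with d = 0 computed from the product marginal equals G(v): namely, (1/2)·Γ(0)·Γ(−1) + (1/2)·Γ(1)·Γ(0) + c·Γ(0)² + Γ(1)·Γ(−1) = G(v), where Γ = Γ^{θ(v)} is the one-site marginal at chemical potential θ(v), c = (b/(1−2b))², and G is as in the symmetric flux formula. -/
open Real

/-! Both `c Γ(0)²` and `Γ(1) Γ(-1)` equal `b² / Z²`, so the jump rate is
`b ((1 - 2b) cosh θ + 2b) / Z²` for every `θ`. At `θ = θ(v)` one has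
`s² - ((1 - 2b) v)² = 4b² (1 - v²)` with `s = √(4b² + (1 - 4b) v²)`, which turns `e^{-θ(v)}` into
`(s - (1 - 2b) v) / (2b (1 + v))`, hence `cosh θ(v) = (s + (1 - 2b) v²) / (2b (1 - v²))`;
substituting this leaves an identity of rational functions of `b`, `v` and `s`. -/

lemma jumpRate_eq_cosh (b θ Z : ℝ) (hb : 1 - 2*b ≠ 0) :
    (1/2) * ((1 - 2*b) / Z) * (b * exp (-θ) / Z) + (1/2) * (b * exp θ / Z) * ((1 - 2*b) / Z)
      + (b / (1 - 2*b))^2 * ((1 - 2*b) / Z)^2 + (b * exp θ / Z) * (b * exp (-θ) / Z)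
      = b * ((1 - 2*b) * cosh θ + 2*b) / Z^2 := by
  rcases eq_or_ne Z 0 with rfl | hZ
  · simp
  rw [cosh_eq, exp_neg]
  field_simp
  ring

section Discriminant

variable {b v : ℝ}

lemma sq_sqrt_disc_sub (hv : v ∈ Set.Ioo (-1 : ℝ) 1) :
    √(4*b^2 + (1 - 4*b) * v^2) ^ 2 - ((1 - 2*b) * v)^2 = 4*b^2 * (1 - v^2) := by
  have h1v : 0 < 1 - v^2 := by nlinarith [hv.1, hv.2]
  rw [sq_sqrt (by nlinarith [sq_nonneg ((1 - 2*b) * v)])]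
  ring

lemma abs_mul_lt_sqrt_disc (hb0 : 0 < b) (hv : v ∈ Set.Ioo (-1 : ℝ) 1) :
    |(1 - 2*b) * v| < √(4*b^2 + (1 - 4*b) * v^2) := by
  have h1v : 0 < 1 - v^2 := by nlinarith [hv.1, hv.2]
  have key := sq_sqrt_disc_sub (b := b) hv
  exact abs_lt_of_sq_lt_sq (by nlinarith [mul_pos (pow_pos hb0 2) h1v]) (sqrt_nonneg _)

lemma cosh_theta (hb0 : 0 < b) (hv : v ∈ Set.Ioo (-1 : ℝ) 1) :
    cosh (log (((1 - 2*b) * v + √(4*b^2 + (1 - 4*b) * v^2)) / (2*b*(1 - v))))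
      = (√(4*b^2 + (1 - 4*b) * v^2) + (1 - 2*b) * v^2) / (2*b*(1 - v^2)) := by
  have key := sq_sqrt_disc_sub (b := b) hv
  have hlt := abs_lt.mp (abs_mul_lt_sqrt_disc hb0 hv)
  set s := √(4*b^2 + (1 - 4*b) * v^2)
  have h1v : 0 < 1 - v := by linarith [hv.2]
  have h1v' : 0 < 1 + v := by linarith [hv.1]
  have hnum : 0 < (1 - 2*b) * v + s := by linarith [hlt.1]
  have h1v2 : 1 - v^2 ≠ 0 := by nlinarith
  rw [cosh_log (div_pos hnum (by positivity)), inv_div]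
  field_simp
  linear_combination (-(1 - v)^2) * key

lemma jumpRate_at_theta {b v s : ℝ} (hb0 : 0 < b) (hb : 0 < 1 - 2*b) (h1v : 0 < 1 - v^2) (hs : 0 < s)
    (hs2 : s^2 - ((1 - 2*b) * v)^2 = 4*b^2 * (1 - v^2)) :
    b * ((1 - 2*b) * ((s + (1 - 2*b) * v^2) / (2*b*(1 - v^2))) + 2*b)
        / (1 + 2*b*((s + (1 - 2*b) * v^2) / (2*b*(1 - v^2)) - 1))^2
      = -v^2/2 + (4*b^2 + (1 - 2*b)^2 * v^2) / (2 * (4*b^2 + (1 - 2*b) * s)) := by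
  have hD : 0 < 1 - 2*b + s := by linarith
  have hZ : 1 + 2*b*((s + (1 - 2*b) * v^2) / (2*b*(1 - v^2)) - 1) = (1 - 2*b + s) / (1 - v^2) := by
    field_simp
    ring
  have hN : (1 - 2*b) * ((s + (1 - 2*b) * v^2) / (2*b*(1 - v^2))) + 2*b
      = s * (1 - 2*b + s) / (2*b*(1 - v^2)) := by
    field_simp
    linear_combination (-1) * hs2
  have hD' : 0 < 4*b^2 + (1 - 2*b) * s := by positivity
  rw [hZ, hN]
  calc _ = s * (1 - v^2) / (2 * (1 - 2*b + s)) := by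
        field_simp
    _ = _ := by
        rw [div_add_div _ _ two_ne_zero (by positivity), div_eq_div_iff (by positivity) (by positivity)]
        linear_combination (4 - 8*b) * hs2

end Discriminant

theorem stmt_19 (b : ℝ) (hb0 : 0 < b) (hb : b < 1/2) (v : ℝ) (hv : v ∈ Set.Ioo (-1 : ℝ) 1) :
    let θ : ℝ := Real.log (((1 - 2*b) * v + Real.sqrt (4*b^2 + (1 - 4*b) * v^2)) / (2*b*(1 - v)))
    let Z : ℝ := 1 + 2*b*(Real.cosh θ - 1)
    let Γm : ℝ := b * Real.exp (-θ) / Z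
    let Γ0 : ℝ := (1 - 2*b) / Z
    let Γp : ℝ := b * Real.exp θ / Z
    let c : ℝ := (b / (1 - 2*b))^2
    (1/2) * Γ0 * Γm + (1/2) * Γp * Γ0 + c * Γ0^2 + Γp * Γm =
      -v^2/2 + (4*b^2 + (1 - 2*b)^2 * v^2) /
        (2 * (4*b^2 + (1 - 2*b) * Real.sqrt (4*b^2 + (1 - 4*b) * v^2))) := by
  intro θ Z Γm Γ0 Γp c
  have h2b : 0 < 1 - 2*b := by linarith
  have hs2 := sq_sqrt_disc_sub (b := b) hv
  have hs := abs_nonneg ((1 - 2*b) * v) |>.trans_lt (abs_mul_lt_sqrt_disc hb0 hv)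
  have h1v : 0 < 1 - v^2 := by nlinarith [hv.1, hv.2]
  simp only [Γm, Γ0, Γp, c, Z, θ]
  rw [jumpRate_eq_cosh _ _ _ h2b.ne', cosh_theta hb0 hv]
  exact jumpRate_at_theta hb0 h2b h1v hs hs2
end
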